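/- arXiv:2012.10327 — 5 statements merged into one kernel-verified Lean document; each statement's English description precedes it below -/
import Mathlib

section
/- Let Ω ⊆ ℝ² be a convex set that is unbounded, and let ž, ẑ ∈ ℝ². Suppose that the intersection of Ω with the triangle Δ(O, ž, ẑ) (the convex hull of the origin O, ž, and ẑ) is nonempty, and that the two segments [O, ž] and [O, ẑ] are both disjoint from Ω. Then the segment [ž, ẑ] intersects Ω. -/
open Set Filter Topology

set_option maxHeartbeats 1000000 in
/-- Proposition 1 of the paper, first case: if `Ω ⊆ ℝ²` is convex and
unbounded, meets the triangle with vertices `O`, `ž`, `ẑ`, and is disjoint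
from the segments `[O, ž]` and `[O, ẑ]`, then `Ω` meets the segment `[ž, ẑ]`. -/
theorem segment_inter_of_unbounded_convex
    (Ω : Set (EuclideanSpace ℝ (Fin 2))) (hΩ : Convex ℝ Ω)
    (hub : ¬ Bornology.IsBounded Ω)
    (zc zh : EuclideanSpace ℝ (Fin 2))
    (hne : (Ω ∩ convexHull ℝ {0, zc, zh}).Nonempty)
    (h1 : segment ℝ 0 zc ∩ Ω = ∅)
    (h2 : segment ℝ 0 zh ∩ Ω = ∅) :
    (segment ℝ zc zh ∩ Ω).Nonempty := by
  classical
  obtain ⟨x, hxΩ, hxΔ⟩ := hne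
  set Δ : Set (EuclideanSpace ℝ (Fin 2)) := convexHull ℝ {0, zc, zh} with hΔdef
  by_cases hind : AffineIndependent ℝ ![(0 : EuclideanSpace ℝ (Fin 2)), zc, zh]
  · -- nondegenerate triangle
    have hΔfin : ({(0 : EuclideanSpace ℝ (Fin 2)), zc, zh} :
        Set (EuclideanSpace ℝ (Fin 2))).Finite := Set.toFinite _
    have hΔcpt : IsCompact Δ := hΔfin.isCompact_convexHull ℝ
    obtain ⟨y, hyΩ, hyΔ⟩ : ∃ y ∈ Ω, y ∉ Δ := by
      by_contra h; push_neg at h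
      exact hub (hΔcpt.isBounded.subset fun y hy => h y hy)
    set f : ℝ → EuclideanSpace ℝ (Fin 2) := fun t => (1 - t) • x + t • y with hf
    have hfc : Continuous f := by fun_prop
    set S : Set ℝ := Icc (0 : ℝ) 1 ∩ f ⁻¹' Δ with hS
    have hScpt : IsCompact S := isCompact_Icc.inter_right (hΔcpt.isClosed.preimage hfc)
    have hSne : S.Nonempty := ⟨0, ⟨le_refl 0, zero_le_one⟩, by simp [hf, hxΔ]⟩
    set T : ℝ := sSup S with hT
    have hTS : T ∈ S := hScpt.sSup_mem hSne
    have hT0 : 0 ≤ T := hTS.1.1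
    have hT1 : T ≤ 1 := hTS.1.2
    set p : EuclideanSpace ℝ (Fin 2) := f T with hp
    have hpΔ : p ∈ Δ := hTS.2
    have hpΩ : p ∈ Ω := by
      refine hΩ.segment_subset hxΩ hyΩ ⟨1 - T, T, by linarith, hT0, by ring, rfl⟩
    have hTlt1 : T < 1 := by
      rcases lt_or_eq_of_le hT1 with h | h
      · exact h
      · exfalso; apply hyΔ
        have : f 1 = y := by simp [hf]
        rw [← this, ← h]; exact hpΔ
    -- p is not in the interior of the triangle
    have hpint : p ∉ interior Δ := by
      intro hpi
      have h1' : ∀ᶠ t in 𝓝 T, f t ∈ interior Δ :=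
        hfc.continuousAt (isOpen_interior.mem_nhds hpi)
      have h2' : ∀ᶠ t in 𝓝 T, t < 1 := eventually_lt_nhds hTlt1
      have h3' : ∀ᶠ t in 𝓝[>] T, f t ∈ interior Δ ∧ t < 1 :=
        ((h1'.and h2').filter_mono nhdsWithin_le_nhds)
      obtain ⟨t, ⟨hti, htlt⟩, htT⟩ := (h3'.and self_mem_nhdsWithin).exists
      have htS : t ∈ S := ⟨⟨le_trans hT0 (le_of_lt htT), le_of_lt htlt⟩,
        (show f t ∈ Δ from interior_subset hti)⟩
      have : t ≤ T := le_csSup hScpt.bddAbove htS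
      exact absurd htT (not_lt.mpr this)
    -- build the affine basis
    have hspan : affineSpan ℝ (Set.range ![(0 : EuclideanSpace ℝ (Fin 2)), zc, zh]) = ⊤ := by
      rw [hind.affineSpan_eq_top_iff_card_eq_finrank_add_one]
      simp [finrank_euclideanSpace_fin]
    let b : AffineBasis (Fin 3) ℝ (EuclideanSpace ℝ (Fin 2)) := ⟨![(0 : EuclideanSpace ℝ (Fin 2)), zc, zh], hind, hspan⟩
    have hb : ⇑b = ![(0 : EuclideanSpace ℝ (Fin 2)), zc, zh] := rfl
    have hrange : Set.range ⇑b = ({0, zc, zh} : Set (EuclideanSpace ℝ (Fin 2))) := by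
      rw [hb]; ext z; simp [Matrix.range_cons, Matrix.range_empty]; tauto
    have hint := b.interior_convexHull
    rw [hrange] at hint
    -- decompose p using the triangle structure
    have hpΔ' : p ∈ convexJoin ℝ {(0 : EuclideanSpace ℝ (Fin 2))}
        (convexHull ℝ ({zc, zh} : Set (EuclideanSpace ℝ (Fin 2)))) := by
      rw [← convexHull_insert ⟨zc, Set.mem_insert _ _⟩]; exact hpΔ
    rw [convexHull_pair, mem_convexJoin] at hpΔ'
    obtain ⟨o, ho, q, hq, hpq⟩ := hpΔ'
    rw [Set.mem_singleton_iff] at ho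
    subst ho
    obtain ⟨a, c, ha, hc, hac, hq'⟩ := hq
    obtain ⟨u, s, hu, hs, hus, hps⟩ := hpq
    have hpsq : p = s • q := by rw [← hps]; simp
    have hs1 : s ≤ 1 := by linarith
    set w : Fin 3 → ℝ := ![1 - s, s * a, s * c] with hw
    have hw1 : ∑ i, w i = 1 := by
      simp [hw, Fin.sum_univ_three]; nlinarith
    have hw1' : (Finset.univ : Finset (Fin 3)).sum w = 1 := hw1
    have hcomb : Finset.univ.affineCombination ℝ (⇑b) w = p := by
      rw [Finset.affineCombination_eq_linear_combination _ _ _ hw1']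
      rw [hpsq, ← hq']
      simp [hb, hw, Fin.sum_univ_three]
      module
    have hcoord : ∀ i, b.coord i p = w i := by
      intro i
      rw [← hcomb, b.coord_apply_combination_of_mem (Finset.mem_univ i) hw1']
    obtain ⟨i, hi⟩ : ∃ i, ¬ 0 < b.coord i p := by
      by_contra h; push_neg at h
      exact hpint (hint ▸ h)
    rw [hcoord i] at hi
    fin_cases i
    · -- weight at 0 vanishes: p is on [zc, zh]
      have hs1' : s = 1 := by
        simp [hw] at hi; linarith
      refine ⟨p, ?_, hpΩ⟩
      rw [hpsq, hs1', one_smul, ← hq']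
      exact ⟨a, c, ha, hc, hac, rfl⟩
    · -- weight at zc vanishes: p ∈ [0, zh], contradiction
      exfalso
      have hsa : s * a = 0 := le_antisymm (by simpa [hw] using hi) (by positivity)
      have hpzh : p = (s * c) • zh := by
        rw [hpsq, ← hq', smul_add, smul_smul, smul_smul, hsa, zero_smul, zero_add]
      have hmem : p ∈ segment ℝ (0 : EuclideanSpace ℝ (Fin 2)) zh := by
        refine ⟨1 - s * c, s * c, by nlinarith, by positivity, by ring, ?_⟩
        rw [smul_zero, zero_add, hpzh]
      have : p ∈ segment ℝ (0 : EuclideanSpace ℝ (Fin 2)) zh ∩ Ω := ⟨hmem, hpΩ⟩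
      rw [h2] at this; exact this
    · -- weight at zh vanishes: p ∈ [0, zc], contradiction
      exfalso
      have hsc : s * c = 0 := le_antisymm (by simpa [hw] using hi) (by positivity)
      have hpzc : p = (s * a) • zc := by
        rw [hpsq, ← hq', smul_add, smul_smul, smul_smul, hsc, zero_smul, add_zero]
      have hmem : p ∈ segment ℝ (0 : EuclideanSpace ℝ (Fin 2)) zc := by
        refine ⟨1 - s * a, s * a, by nlinarith, by positivity, by ring, ?_⟩
        rw [smul_zero, zero_add, hpzc]
      have : p ∈ segment ℝ (0 : EuclideanSpace ℝ (Fin 2)) zc ∩ Ω := ⟨hmem, hpΩ⟩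
      rw [h1] at this; exact this
  · -- degenerate case: the three points are collinear
    have hcol : Collinear ℝ ({(0 : EuclideanSpace ℝ (Fin 2)), zc, zh} : Set (EuclideanSpace ℝ (Fin 2))) := by
      by_contra h
      exact hind (affineIndependent_iff_not_collinear_set.mpr h)
    rcases hcol.wbtw_or_wbtw_or_wbtw with h | h | h
    · -- zc between 0 and zh : triangle ⊆ [0, zh]
      exfalso
      have hsub : Δ ⊆ segment ℝ (0 : EuclideanSpace ℝ (Fin 2)) zh := by
        apply convexHull_min _ (convex_segment _ _)
        intro z hz
        rcases hz with rfl | rfl | rfl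
        · exact left_mem_segment _ _ _
        · exact h.mem_segment
        · exact right_mem_segment _ _ _
      have : x ∈ segment ℝ (0 : EuclideanSpace ℝ (Fin 2)) zh ∩ Ω := ⟨hsub hxΔ, hxΩ⟩
      rw [h2] at this; exact this
    · -- zh between zc and 0 : triangle ⊆ [0, zc]
      exfalso
      have hsub : Δ ⊆ segment ℝ (0 : EuclideanSpace ℝ (Fin 2)) zc := by
        apply convexHull_min _ (convex_segment _ _)
        intro z hz
        rcases hz with rfl | rfl | rfl
        · exact left_mem_segment _ _ _
        · exact right_mem_segment _ _ _
        · rw [segment_symm]; exact h.mem_segment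
      have : x ∈ segment ℝ (0 : EuclideanSpace ℝ (Fin 2)) zc ∩ Ω := ⟨hsub hxΔ, hxΩ⟩
      rw [h1] at this; exact this
    · -- 0 between zh and zc : triangle ⊆ [zc, zh]
      have hsub : Δ ⊆ segment ℝ zc zh := by
        apply convexHull_min _ (convex_segment _ _)
        intro z hz
        rcases hz with rfl | rfl | rfl
        · rw [segment_symm]; exact h.mem_segment
        · exact left_mem_segment _ _ _
        · exact right_mem_segment _ _ _
      exact ⟨x, hsub hxΔ, hxΩ⟩
end

section
/- Let Ω ⊆ ℝ² be a convex set, let v ≥ 0 be such that ‖y‖² ≥ v for every y ∈ Ω, and suppose there exist y′ ∈ ℝ² and r > 0 with the open ball B(y′, r) contained in Ω. Let ε satisfy 0 < ε < r², and let ž, ẑ ∈ ℝ² with ‖ž‖² ≤ v + ε and ‖ẑ‖² ≤ v + ε. Suppose the intersection of Ω with the triangle Δ(O, ž, ẑ) (the convex hull of the origin O, ž, and ẑ) is nonempty, and that the segments [O, ž] and [O, ẑ] are both disjoint from Ω. Then the segment [ž, ẑ] intersects Ω. -/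
-- auxiliary: the ball center cannot be in the triangle
set_option maxHeartbeats 1000000 in
lemma aux_not_in_tri
    (Ω : Set (EuclideanSpace ℝ (Fin 2)))
    (v : ℝ) (hv : 0 ≤ v) (hlow : ∀ y ∈ Ω, v ≤ ‖y‖ ^ 2)
    (y' : EuclideanSpace ℝ (Fin 2)) (r : ℝ) (hr : 0 < r)
    (hball : Metric.ball y' r ⊆ Ω)
    (ε : ℝ) (hε0 : 0 < ε) (hεr : ε < r ^ 2)
    (zc zh : EuclideanSpace ℝ (Fin 2))
    (hzc : ‖zc‖ ^ 2 ≤ v + ε) (hzh : ‖zh‖ ^ 2 ≤ v + ε)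
    (h0 : (0 : EuclideanSpace ℝ (Fin 2)) ∉ Ω)
    (B C : ℝ) (hB : 0 ≤ B) (hC : 0 ≤ C) (hBC : B + C ≤ 1)
    (hy' : y' = B • zc + C • zh) : False := by
  set n := ‖y'‖ with hn
  have hnr : r ≤ n := by
    by_contra h
    push_neg at h
    exact h0 (hball (by simpa [Metric.mem_ball, dist_eq_norm] using h))
  have hnpos : 0 < n := lt_of_lt_of_le hr hnr
  have hn1 : n ≤ B * ‖zc‖ + C * ‖zh‖ := by
    calc n = ‖B • zc + C • zh‖ := by rw [hn, hy']
    _ ≤ ‖B • zc‖ + ‖C • zh‖ := norm_add_le _ _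
    _ = B * ‖zc‖ + C * ‖zh‖ := by
        rw [norm_smul, norm_smul, Real.norm_eq_abs, Real.norm_eq_abs,
          abs_of_nonneg hB, abs_of_nonneg hC]
  have hvε : 0 < v + ε := by linarith
  have h3 : n ^ 2 ≤ (B * ‖zc‖ + C * ‖zh‖) ^ 2 := by
    nlinarith [norm_nonneg y']
  have h4 : (B * ‖zc‖ + C * ‖zh‖) ^ 2 ≤ (B + C) * (B * ‖zc‖ ^ 2 + C * ‖zh‖ ^ 2) := by
    nlinarith [mul_nonneg hB hC, sq_nonneg (‖zc‖ - ‖zh‖)]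
  have h5 : B * ‖zc‖ ^ 2 + C * ‖zh‖ ^ 2 ≤ (B + C) * (v + ε) := by
    nlinarith [mul_le_mul_of_nonneg_left hzc hB, mul_le_mul_of_nonneg_left hzh hC]
  have hn2 : n ^ 2 ≤ v + ε := by
    nlinarith [mul_le_mul_of_nonneg_left h5 (add_nonneg hB hC),
      mul_nonneg (add_nonneg hB hC) hvε.le]
  have hsq : Real.sqrt ε < r := by
    have h1 : Real.sqrt ε < Real.sqrt (r ^ 2) := Real.sqrt_lt_sqrt hε0.le hεr
    rwa [Real.sqrt_sq hr.le] at h1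
  set ρ := (Real.sqrt ε + r) / 2 with hρ
  have hρr : ρ < r := by rw [hρ]; linarith
  have hρpos : 0 < ρ := by
    have := Real.sqrt_nonneg ε
    rw [hρ]; linarith
  have hρε : ε < ρ ^ 2 := by
    have h1 : Real.sqrt ε < ρ := by rw [hρ]; linarith
    nlinarith [Real.sq_sqrt hε0.le, Real.sqrt_nonneg ε]
  set q : EuclideanSpace ℝ (Fin 2) := (1 - ρ / n) • y' with hq
  have hqball : q ∈ Metric.ball y' r := by
    rw [Metric.mem_ball, dist_eq_norm]
    have h1 : q - y' = (-(ρ / n)) • y' := by rw [hq]; module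
    rw [h1, norm_smul, Real.norm_eq_abs, abs_neg, abs_of_nonneg (by positivity)]
    rw [div_mul_cancel₀ _ hnpos.ne']
    exact hρr
  have hqnorm : ‖q‖ = n - ρ := by
    rw [hq, norm_smul, Real.norm_eq_abs]
    have h1 : 0 ≤ 1 - ρ / n := by
      rw [sub_nonneg, div_le_one hnpos]; linarith
    rw [abs_of_nonneg h1, ← hn]
    field_simp
  have hvq : v ≤ ‖q‖ ^ 2 := hlow q (hball hqball)
  rw [hqnorm] at hvq
  nlinarith

/-- Proposition 1 of the paper, second case: if `Ω ⊆ ℝ²` is convex, bounded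
below in squared norm by `v`, contains a ball `B(y', r)`, `0 < ε < r²`,
`‖ž‖² ≤ v + ε`, `‖ẑ‖² ≤ v + ε`, `Ω` meets the triangle with vertices
`O`, `ž`, `ẑ`, and `Ω` is disjoint from the segments `[O, ž]` and `[O, ẑ]`,
then `Ω` meets the segment `[ž, ẑ]`. -/
theorem segment_inter_of_interior_point
    (Ω : Set (EuclideanSpace ℝ (Fin 2))) (hΩ : Convex ℝ Ω)
    (v : ℝ) (hv : 0 ≤ v) (hlow : ∀ y ∈ Ω, v ≤ ‖y‖ ^ 2)
    (y' : EuclideanSpace ℝ (Fin 2)) (r : ℝ) (hr : 0 < r)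
    (hball : Metric.ball y' r ⊆ Ω)
    (ε : ℝ) (hε0 : 0 < ε) (hεr : ε < r ^ 2)
    (zc zh : EuclideanSpace ℝ (Fin 2))
    (hzc : ‖zc‖ ^ 2 ≤ v + ε) (hzh : ‖zh‖ ^ 2 ≤ v + ε)
    (hne : (Ω ∩ convexHull ℝ {0, zc, zh}).Nonempty)
    (h1 : segment ℝ 0 zc ∩ Ω = ∅)
    (h2 : segment ℝ 0 zh ∩ Ω = ∅) :
    (segment ℝ zc zh ∩ Ω).Nonempty := by
  classical
  obtain ⟨x, hxΩ, hxT⟩ := hne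
  have h1' : ∀ p ∈ segment ℝ (0 : EuclideanSpace ℝ (Fin 2)) zc, p ∉ Ω := by
    intro p hp hpΩ
    exact absurd h1 (Set.Nonempty.ne_empty ⟨p, hp, hpΩ⟩)
  have h2' : ∀ p ∈ segment ℝ (0 : EuclideanSpace ℝ (Fin 2)) zh, p ∉ Ω := by
    intro p hp hpΩ
    exact absurd h2 (Set.Nonempty.ne_empty ⟨p, hp, hpΩ⟩)
  -- representation of x
  obtain ⟨B0, C0, hB0, hC0, hBC0, hxeq⟩ :
      ∃ B C : ℝ, 0 ≤ B ∧ 0 ≤ C ∧ B + C ≤ 1 ∧ x = B • zc + C • zh := by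
    rw [show ({0, zc, zh} : Set (EuclideanSpace ℝ (Fin 2))) = insert 0 {zc, zh} from rfl,
      convexHull_insert ⟨zc, by simp⟩, convexHull_pair] at hxT
    rw [mem_convexJoin] at hxT
    obtain ⟨o, ho, w, hw, hxw⟩ := hxT
    rw [Set.mem_singleton_iff] at ho
    subst ho
    obtain ⟨a, b, ha, hb, hab, hw⟩ := hw
    obtain ⟨u, u', hu, hu', huu, hx⟩ := hxw
    refine ⟨u' * a, u' * b, by positivity, by positivity, by nlinarith, ?_⟩
    rw [← hx, ← hw]
    module
  by_cases hD : zc 0 * zh 1 - zc 1 * zh 0 = 0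
  · -- degenerate case: 0, zc, zh collinear
    by_cases hzc0 : zc = 0
    · exfalso
      refine h2' x ⟨1 - C0, C0, by linarith, hC0, by ring, ?_⟩ hxΩ
      rw [hxeq, hzc0]
      simp
    · obtain ⟨s, hs⟩ : ∃ s : ℝ, zh = s • zc := by
        by_cases h00 : zc 0 = 0
        · have h1c : zc 1 ≠ 0 := by
            intro h
            apply hzc0
            ext i
            fin_cases i <;> simp [h00, h]
          refine ⟨zh 1 / zc 1, ?_⟩
          ext i
          fin_cases i
          · show zh 0 = (zh 1 / zc 1) • zc 0
            rw [h00] at hD ⊢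
            simp only [smul_eq_mul, mul_zero]
            have : zc 1 * zh 0 = 0 := by linarith [hD]
            rcases mul_eq_zero.mp this with h | h
            · exact absurd h h1c
            · exact h
          · show zh 1 = (zh 1 / zc 1) • zc 1
            rw [smul_eq_mul, div_mul_cancel₀ _ h1c]
        · refine ⟨zh 0 / zc 0, ?_⟩
          ext i
          fin_cases i
          · show zh 0 = (zh 0 / zc 0) • zc 0
            rw [smul_eq_mul, div_mul_cancel₀ _ h00]
          · show zh 1 = (zh 0 / zc 0) • zc 1
            rw [smul_eq_mul, div_mul_eq_mul_div, eq_div_iff h00]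
            linarith [hD]
      set τ := B0 + C0 * s with hτdef
      have hxτ : x = τ • zc := by rw [hxeq, hs, hτdef]; module
      rcases lt_or_ge s 0 with hsneg | hsnn
      · -- x itself lies on segment zc zh
        have hτl : s ≤ τ := by
          have h := mul_nonpos_of_nonneg_of_nonpos (by linarith : (0:ℝ) ≤ 1 - C0) hsneg.le
          rw [hτdef]; nlinarith
        have hτu : τ ≤ 1 := by
          have h := mul_nonpos_of_nonneg_of_nonpos hC0 hsneg.le
          rw [hτdef]; linarith
        have h1s : (0:ℝ) < 1 - s := by linarith
        have hcoef : (τ - s) / (1 - s) + ((1 - τ) / (1 - s)) * s = τ := by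
          field_simp
          ring
        refine ⟨x, ⟨(τ - s) / (1 - s), (1 - τ) / (1 - s),
          div_nonneg (by linarith) h1s.le, div_nonneg (by linarith) h1s.le,
          by field_simp; ring, ?_⟩, hxΩ⟩
        rw [hs, hxτ, smul_smul, ← add_smul, hcoef]
      · rcases le_or_gt s 1 with hs1 | hs1
        · -- x on segment 0 zc : contradiction
          exfalso
          have hτ0 : 0 ≤ τ := add_nonneg hB0 (mul_nonneg hC0 hsnn)
          have hτ1 : τ ≤ 1 := by
            have := mul_le_of_le_one_right hC0 hs1
            rw [hτdef]; linarith
          refine h1' x ⟨1 - τ, τ, by linarith, hτ0, by ring, ?_⟩ hxΩ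
          rw [hxτ]
          simp
        · -- x on segment 0 zh : contradiction
          exfalso
          have hspos : (0:ℝ) < s := by linarith
          have hτ0 : 0 ≤ τ := add_nonneg hB0 (mul_nonneg hC0 hsnn)
          have hτs : τ ≤ s := by
            have h4 := mul_nonneg hB0 (by linarith : (0:ℝ) ≤ s - 1)
            have h5 := mul_le_mul_of_nonneg_right hBC0 hsnn
            rw [hτdef]; nlinarith
          have hdiv : τ / s ≤ 1 := (div_le_one hspos).mpr hτs
          have hcan : (τ / s) * s = τ := div_mul_cancel₀ τ hspos.ne'
          refine h2' x ⟨1 - τ / s, τ / s, by linarith, div_nonneg hτ0 hspos.le,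
            by ring, ?_⟩ hxΩ
          rw [hs, hxτ, smul_smul, hcan]
          simp
  · -- main case: zc, zh linearly independent
    set D := zc 0 * zh 1 - zc 1 * zh 0 with hDdef
    have hD' : zc 0 * zh 1 - zc 1 * zh 0 ≠ 0 := hD
    have hD₂ : zc 0 * zh 1 - zh 0 * zc 1 ≠ 0 := by rw [mul_comm (zh 0)]; exact hD'
    have hD₃ : zh 1 * zc 0 - zh 0 * zc 1 ≠ 0 := by rw [mul_comm (zh 0), mul_comm (zh 1)]; exact hD'
    set b : EuclideanSpace ℝ (Fin 2) → ℝ :=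
      fun p => (p 0 * zh 1 - p 1 * zh 0) / D with hbdef
    set c : EuclideanSpace ℝ (Fin 2) → ℝ :=
      fun p => (zc 0 * p 1 - zc 1 * p 0) / D with hcdef
    have hbc : ∀ p : EuclideanSpace ℝ (Fin 2), (b p) • zc + (c p) • zh = p := by
      intro p
      ext i
      fin_cases i <;>
      · simp [hbdef, hcdef, hDdef, PiLp.add_apply, PiLp.smul_apply, smul_eq_mul]
        field_simp
        ring
    have hb_of : ∀ α γ : ℝ, b (α • zc + γ • zh) = α := by
      intro α γ
      simp only [hbdef, PiLp.add_apply, PiLp.smul_apply, smul_eq_mul, hDdef]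
      field_simp
      ring
    have hc_of : ∀ α γ : ℝ, c (α • zc + γ • zh) = γ := by
      intro α γ
      simp only [hcdef, PiLp.add_apply, PiLp.smul_apply, smul_eq_mul, hDdef]
      field_simp
      ring
    have hy'Ω : y' ∈ Ω := hball (Metric.mem_ball_self hr)
    have h0Ω : (0 : EuclideanSpace ℝ (Fin 2)) ∉ Ω :=
      h1' 0 (left_mem_segment ℝ 0 zc)
    have hnotT : ¬ (0 ≤ b y' ∧ 0 ≤ c y' ∧ b y' + c y' ≤ 1) := by
      rintro ⟨hB, hC, hBC⟩
      exact aux_not_in_tri Ω v hv hlow y' r hr hball ε hε0 hεr zc zh hzc hzh h0Ω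
        (b y') (c y') hB hC hBC (hbc y').symm
    set β : ℝ → ℝ := fun t => (1 - t) * b x + t * b y' with hβdef
    set ζ : ℝ → ℝ := fun t => (1 - t) * c x + t * c y' with hζdef
    have hFb : ∀ t : ℝ, b ((1 - t) • x + t • y') = β t := by
      intro t
      simp only [hbdef, hβdef, PiLp.add_apply, PiLp.smul_apply, smul_eq_mul]
      field_simp
      ring
    have hFc : ∀ t : ℝ, c ((1 - t) • x + t • y') = ζ t := by
      intro t
      simp only [hcdef, hζdef, PiLp.add_apply, PiLp.smul_apply, smul_eq_mul]
      field_simp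
      ring
    have hβcont : Continuous β := by fun_prop
    have hζcont : Continuous ζ := by fun_prop
    set S : Set ℝ := {t | t ∈ Set.Icc (0:ℝ) 1 ∧ 0 ≤ β t ∧ 0 ≤ ζ t ∧ β t + ζ t ≤ 1}
      with hSdef
    have hScl : IsClosed S := by
      have : S = Set.Icc (0:ℝ) 1 ∩ (β ⁻¹' Set.Ici 0) ∩ (ζ ⁻¹' Set.Ici 0) ∩
          ((fun t => β t + ζ t) ⁻¹' Set.Iic 1) := by
        ext t
        simp only [hSdef, Set.mem_setOf_eq, Set.mem_inter_iff, Set.mem_preimage,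
          Set.mem_Ici, Set.mem_Iic]
        tauto
      rw [this]
      exact (((isClosed_Icc.inter (isClosed_Ici.preimage hβcont)).inter
        (isClosed_Ici.preimage hζcont)).inter
        (isClosed_Iic.preimage (hβcont.add hζcont)))
    have hbx : b x = B0 := by rw [hxeq]; exact hb_of B0 C0
    have hcx : c x = C0 := by rw [hxeq]; exact hc_of B0 C0
    have hS0 : (0:ℝ) ∈ S := by
      refine ⟨⟨le_refl 0, zero_le_one⟩, ?_, ?_, ?_⟩ <;>
        simp [hβdef, hζdef, hbx, hcx] <;> linarith
    have hbdd : BddAbove S := ⟨1, fun t ht => ht.1.2⟩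
    set t₀ := sSup S with ht₀def
    have ht₀S : t₀ ∈ S := hScl.csSup_mem ⟨0, hS0⟩ hbdd
    obtain ⟨⟨ht₀0, ht₀1⟩, hβ0, hζ0, hβζ⟩ := ht₀S
    set p : EuclideanSpace ℝ (Fin 2) := (1 - t₀) • x + t₀ • y' with hpdef
    have hpΩ : p ∈ Ω := hΩ hxΩ hy'Ω (by linarith) ht₀0 (by ring)
    have hprep : p = β t₀ • zc + ζ t₀ • zh := by
      conv_lhs => rw [← hbc p]
      rw [hpdef, hFb, hFc]
    have hβpos : 0 < β t₀ := by
      rcases hβ0.lt_or_eq with h | h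
      · exact h
      · exfalso
        refine h2' p ⟨1 - ζ t₀, ζ t₀, by linarith, hζ0, by ring, ?_⟩ hpΩ
        rw [hprep, ← h]
        simp
    have hζpos : 0 < ζ t₀ := by
      rcases hζ0.lt_or_eq with h | h
      · exact h
      · exfalso
        refine h1' p ⟨1 - β t₀, β t₀, by linarith, hβ0, by ring, ?_⟩ hpΩ
        rw [hprep, ← h]
        simp
    have hsum : β t₀ + ζ t₀ = 1 := by
      by_contra hne1
      have hlt : β t₀ + ζ t₀ < 1 := lt_of_le_of_ne hβζ hne1
      have ht₀lt1 : t₀ < 1 := by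
        rcases ht₀1.lt_or_eq with h | h
        · exact h
        · exfalso
          apply hnotT
          rw [h] at hβ0 hζ0 hβζ
          simp only [hβdef, hζdef, sub_self, zero_mul, one_mul, zero_add] at hβ0 hζ0 hβζ
          exact ⟨hβ0, hζ0, hβζ⟩
      set m : ℝ → ℝ := fun t => min (β t) (min (ζ t) (1 - β t - ζ t)) with hmdef
      have hmc : Continuous m := by fun_prop
      have hmt₀ : 0 < m t₀ := by
        simp only [hmdef, lt_min_iff]
        exact ⟨hβpos, hζpos, by linarith⟩
      have hmem : {t : ℝ | 0 < m t} ∈ nhds t₀ :=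
        (isOpen_lt continuous_const hmc).mem_nhds hmt₀
      obtain ⟨δ, hδ, hsub⟩ := Metric.mem_nhds_iff.mp hmem
      set t₁ := min (t₀ + δ / 2) ((t₀ + 1) / 2) with ht₁def
      have h1a : t₀ < t₁ := lt_min (by linarith) (by linarith)
      have h1b : t₁ ≤ 1 := le_trans (min_le_right _ _) (by linarith)
      have h1m : t₁ ∈ Metric.ball t₀ δ := by
        rw [Metric.mem_ball, Real.dist_eq, abs_lt]
        constructor
        · linarith
        · have := min_le_left (t₀ + δ / 2) ((t₀ + 1) / 2)
          rw [ht₁def]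
          linarith
      have hm1 : 0 < m t₁ := hsub h1m
      simp only [hmdef, lt_min_iff] at hm1
      have ht₁S : t₁ ∈ S := ⟨⟨by linarith, h1b⟩, hm1.1.le, hm1.2.1.le, by linarith [hm1.2.2]⟩
      exact absurd (le_csSup hbdd ht₁S) (not_le.mpr h1a)
    exact ⟨p, ⟨β t₀, ζ t₀, hβpos.le, hζpos.le, hsum, hprep.symm⟩, hpΩ⟩
end

section
/- Let f(x) = x₁ + x₂, g(x) = 2x₁² − x₂² for x ∈ ℝ², and F(z) = 4z₁² + z₂ for z ∈ ℝ². Then: (i) for all x ∈ ℝ² and z ∈ ℝ² with z₁ = f(x) and z₂ = g(x), one has F(z) ≥ 0 (equivalently, 4(x₁+x₂)² + 2x₁² − x₂² ≥ 0 for all x ∈ ℝ²); but (ii) there exist no α, β ∈ ℝ such that 4z₁² + z₂ + α(x₁ + x₂ − z₁) + β(2x₁² − x₂² − z₂) ≥ 0 for all x ∈ ℝ² and all z ∈ ℝ². (Hence the convexity assumption on the joint numerical range cannot be omitted from the S-procedure.) -/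
/-- Example 1 of the paper: with `f x = x₁ + x₂`, `g x = 2x₁² − x₂²` and
`F z = 4z₁² + z₂`, statement (G1) holds but (G2) fails, so the convexity of the
joint numerical range cannot be omitted from the S-procedure. -/
theorem counterexample_nonconvex_range :
    (∀ x z : ℝ × ℝ, z.1 = x.1 + x.2 → z.2 = 2 * x.1 ^ 2 - x.2 ^ 2 →
      4 * z.1 ^ 2 + z.2 ≥ 0) ∧
    ¬ ∃ α β : ℝ, ∀ x z : ℝ × ℝ,
      4 * z.1 ^ 2 + z.2 + α * (x.1 + x.2 - z.1)
        + β * (2 * x.1 ^ 2 - x.2 ^ 2 - z.2) ≥ 0 := by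
  constructor
  · rintro x z h1 h2
    rw [h1, h2]
    nlinarith [sq_nonneg (2*x.1 + x.2), sq_nonneg (x.1 + x.2), sq_nonneg x.1, sq_nonneg x.2]
  · rintro ⟨α, β, h⟩
    by_cases hβ : β = 1
    · subst hβ
      have := h (0, |α| + 1) (0, 0)
      simp at this
      nlinarith [abs_nonneg α, le_abs_self α]
    · have := h (0, 0) (0, -1 / (1 - β))
      have hne : (1 : ℝ) - β ≠ 0 := sub_ne_zero.mpr (Ne.symm hβ)
      simp at this
      have key : (1 - β) * (-1 / (1 - β)) = -1 := by field_simp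
      nlinarith [this, key]
end

section
/- Let f(x) = x₁², g(x) = x₂² for x ∈ ℝ², and F(z) = 2z₁z₂ for z ∈ ℝ². Then: (i) for all x ∈ ℝ² and z ∈ ℝ² with z₁ = f(x) and z₂ = g(x), one has F(z) ≥ 0 (equivalently, 2x₁²x₂² ≥ 0 for all x ∈ ℝ²); but (ii) there exist no α, β ∈ ℝ such that 2z₁z₂ + α(x₁² − z₁) + β(x₂² − z₂) ≥ 0 for all x ∈ ℝ² and all z ∈ ℝ². (Hence the positive-semidefiniteness assumption on the matrix Θ of F cannot be omitted from the S-procedure.) -/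
/-- Example 2 of the paper: with `f x = x₁²`, `g x = x₂²` and `F z = 2z₁z₂`,
statement (G1) holds but (G2) fails, so the positive semidefiniteness of `Θ`
cannot be omitted from the S-procedure. -/
theorem counterexample_nonconvex_F :
    (∀ x z : ℝ × ℝ, z.1 = x.1 ^ 2 → z.2 = x.2 ^ 2 → 2 * z.1 * z.2 ≥ 0) ∧
    ¬ ∃ α β : ℝ, ∀ x z : ℝ × ℝ,
      2 * z.1 * z.2 + α * (x.1 ^ 2 - z.1) + β * (x.2 ^ 2 - z.2) ≥ 0 := by
  constructor
  · intro x z h1 h2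
    rw [h1, h2]
    positivity
  · rintro ⟨α, β, h⟩
    have h1 := h (0, 0) (1, -1)
    have h2 := h (0, 0) (-1, 1)
    simp at h1 h2
    linarith
end

section
/- Let f(x) = xᵀPx + pᵀx + p₀ and g(x) = xᵀQx + qᵀx + q₀ be quadratic functions on ℝⁿ with the matrices P and Q linearly independent. Suppose γ* > 0 is a lower bound for the squared values on the feasible set, i.e., (f(x))² ≥ γ* for every x ∈ ℝⁿ with g(x) ≤ 0. Then either f(x) ≥ √γ* for every x ∈ ℝⁿ with g(x) ≤ 0, or f(x) ≤ −√γ* for every x ∈ ℝⁿ with g(x) ≤ 0. -/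
open scoped Matrix

private lemma AQP_expand_line {n : ℕ} (R : Matrix (Fin n) (Fin n) ℝ) (r : Fin n → ℝ) (r₀ : ℝ)
    (h : (Fin n → ℝ) → ℝ) (hh : ∀ x, h x = x ⬝ᵥ (R *ᵥ x) + r ⬝ᵥ x + r₀)
    (w m : Fin n → ℝ) (t : ℝ) :
    h (w + t • m) = h w + (w ⬝ᵥ (R *ᵥ m) + m ⬝ᵥ (R *ᵥ w) + r ⬝ᵥ m) * t
      + (m ⬝ᵥ (R *ᵥ m)) * t ^ 2 := by
  rw [hh, hh]
  simp [Matrix.mulVec_add, Matrix.mulVec_smul, dotProduct_add, add_dotProduct,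
    dotProduct_smul, smul_dotProduct, smul_eq_mul]
  ring

private lemma AQP_bilin_expand {n : ℕ} (R : Matrix (Fin n) (Fin n) ℝ)
    (x y : Fin n → ℝ) (s : ℝ) :
    (x + s • y) ⬝ᵥ (R *ᵥ (x + s • y)) =
      x ⬝ᵥ (R *ᵥ x) + (x ⬝ᵥ (R *ᵥ y) + y ⬝ᵥ (R *ᵥ x)) * s + (y ⬝ᵥ (R *ᵥ y)) * s ^ 2 := by
  simp [Matrix.mulVec_add, Matrix.mulVec_smul, dotProduct_add, add_dotProduct,
    dotProduct_smul, smul_dotProduct, smul_eq_mul]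
  ring

/-- Along a line where both quadratics have negative leading coefficient, if the base point
is feasible with positive objective value, there is a feasible zero of the objective. -/
private lemma AQP_lemmaM (φ ψ : ℝ → ℝ) (c α a cψ β b : ℝ)
    (hφ : ∀ t, φ t = c + α * t + a * t ^ 2)
    (hψ : ∀ t, ψ t = cψ + β * t + b * t ^ 2)
    (hc : 0 < c) (ha : a < 0) (hb : b < 0) (hcψ : cψ ≤ 0) :
    ∃ t : ℝ, ψ t ≤ 0 ∧ φ t = 0 := by
  have hφc : Continuous φ := by
    have : φ = fun t => c + α * t + a * t ^ 2 := funext hφ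
    rw [this]; continuity
  set T : ℝ := max 1 ((|α| + c + 1) / (-a)) with hT
  have hT1 : (1:ℝ) ≤ T := le_max_left _ _
  have hT0 : (0:ℝ) ≤ T := by linarith
  have hTa : |α| + c + 1 ≤ (-a) * T := by
    have h := le_max_right 1 ((|α| + c + 1) / (-a))
    rw [div_le_iff₀ (by linarith : (0:ℝ) < -a)] at h
    linarith [h.trans_eq (mul_comm T (-a))]
  have hφT : φ T < 0 := by
    rw [hφ]
    nlinarith [mul_le_mul_of_nonneg_right hTa hT0,
      mul_le_mul_of_nonneg_right (le_abs_self α) hT0, hc]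
  have hφT' : φ (-T) < 0 := by
    rw [hφ]
    nlinarith [mul_le_mul_of_nonneg_right hTa hT0,
      mul_le_mul_of_nonneg_right (neg_abs_le α) hT0, hc]
  have hφ0 : φ 0 = c := by rw [hφ]; ring
  by_cases hall : ∀ t ∈ Set.Icc (0:ℝ) T, ψ t ≤ 0
  · obtain ⟨t, ht, ht0⟩ := intermediate_value_Icc' hT0 hφc.continuousOn
      (by rw [hφ0]; exact ⟨hφT.le, hc.le⟩ : (0:ℝ) ∈ Set.Icc (φ T) (φ 0))
    exact ⟨t, hall t ht, ht0⟩
  · push_neg at hall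
    obtain ⟨s, hs, hψs⟩ := hall
    rw [hψ] at hψs
    have hs0 : 0 < s := by
      rcases lt_or_eq_of_le hs.1 with h | h
      · exact h
      · exfalso; rw [← h] at hψs; nlinarith
    have hβ : 0 < β := by nlinarith [mul_pos hs0 hs0]
    have hneg : ∀ t : ℝ, t ≤ 0 → ψ t ≤ 0 := by
      intro t ht
      rw [hψ]
      nlinarith [mul_nonneg hβ.le (neg_nonneg.mpr ht),
        mul_nonneg (neg_pos.mpr hb).le (sq_nonneg t)]
    obtain ⟨t, ht, ht0⟩ := intermediate_value_Icc (by linarith : -T ≤ (0:ℝ)) hφc.continuousOn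
      (by rw [hφ0]; exact ⟨hφT'.le, hc.le⟩ : (0:ℝ) ∈ Set.Icc (φ (-T)) (φ 0))
    exact ⟨t, hneg t ht.2, ht0⟩

/-- Convex constraint case: the segment between the two feasible points is feasible. -/
private lemma AQP_caseI (φ ψ : ℝ → ℝ) (c α a cψ β b : ℝ)
    (hφ : ∀ t, φ t = c + α * t + a * t ^ 2)
    (hψ : ∀ t, ψ t = cψ + β * t + b * t ^ 2)
    (hb : 0 ≤ b) (hc : 0 < c) (hφ1 : φ 1 < 0) (hcψ : cψ ≤ 0) (hψ1 : ψ 1 ≤ 0) :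
    ∃ t : ℝ, ψ t ≤ 0 ∧ φ t = 0 := by
  have hφc : Continuous φ := by
    have : φ = fun t => c + α * t + a * t ^ 2 := funext hφ
    rw [this]; continuity
  have hψ1' : cψ + β * 1 + b * 1 ^ 2 ≤ 0 := by rw [← hψ]; exact hψ1
  have hall : ∀ t ∈ Set.Icc (0:ℝ) 1, ψ t ≤ 0 := by
    intro t ht
    rw [hψ]
    nlinarith [mul_nonneg (mul_nonneg hb ht.1) (by linarith [ht.2] : (0:ℝ) ≤ 1 - t),
      mul_nonneg (by linarith [ht.2] : (0:ℝ) ≤ 1 - t) (neg_nonneg.mpr hcψ),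
      mul_nonneg ht.1 (neg_nonneg.mpr hψ1')]
  have hφ0 : φ 0 = c := by rw [hφ]; ring
  obtain ⟨t, ht, ht0⟩ := intermediate_value_Icc' (by norm_num : (0:ℝ) ≤ 1) hφc.continuousOn
    (by rw [hφ0]; exact ⟨hφ1.le, hc.le⟩ : (0:ℝ) ∈ Set.Icc (φ 1) (φ 0))
  exact ⟨t, hall t ht, ht0⟩

/-- Choose a shift parameter making one quadratic negative while the other stays nonzero. -/
private lemma AQP_threeLam (a₀ a₁ a₂ b₀ b₁ b₂ : ℝ) (ha₀ : a₀ ≠ 0) (hb₂ : b₂ < 0) :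
    ∃ lam : ℝ, b₀ + b₁ * lam + b₂ * lam ^ 2 < 0 ∧ a₀ + a₁ * lam + a₂ * lam ^ 2 ≠ 0 := by
  set L : ℝ := max 1 ((|b₁| + |b₀| + 1) / (-b₂)) with hL
  have hL1 : (1:ℝ) ≤ L := le_max_left _ _
  have hbneg : ∀ lam : ℝ, L ≤ lam → b₀ + b₁ * lam + b₂ * lam ^ 2 < 0 := by
    intro lam hlam
    have h1 : (1:ℝ) ≤ lam := le_trans hL1 hlam
    have h2 : |b₁| + |b₀| + 1 ≤ (-b₂) * lam := by
      have h := (le_max_right 1 ((|b₁| + |b₀| + 1) / (-b₂))).trans hlam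
      rw [div_le_iff₀ (by linarith : (0:ℝ) < -b₂)] at h
      linarith [h.trans_eq (mul_comm lam (-b₂))]
    nlinarith [mul_le_mul_of_nonneg_right h2 (by linarith : (0:ℝ) ≤ lam),
      mul_le_mul_of_nonneg_right (le_abs_self b₁) (by linarith : (0:ℝ) ≤ lam),
      le_abs_self b₀, abs_nonneg b₀, abs_nonneg b₁]
  by_contra hcon
  push_neg at hcon
  have e0 := hcon L (hbneg L le_rfl)
  have e1 := hcon (L + 1) (hbneg _ (by linarith))
  have e2 := hcon (L + 2) (hbneg _ (by linarith))
  apply ha₀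
  linear_combination ((L+1)*(L+2)/2) * e0 - (L*(L+2)) * e1 + (L*(L+1)/2) * e2

/-- A nonzero symmetric matrix has a nonvanishing quadratic form value. -/
private lemma AQP_exists_qf_ne {n : ℕ} (R : Matrix (Fin n) (Fin n) ℝ)
    (hs : R.IsSymm) (hR : R ≠ 0) :
    ∃ e : Fin n → ℝ, e ⬝ᵥ (R *ᵥ e) ≠ 0 := by
  have key : ∀ i j : Fin n, (Pi.single i 1 : Fin n → ℝ) ⬝ᵥ (R *ᵥ Pi.single j 1) = R i j := by
    intro i j
    simp [Matrix.mulVec, dotProduct, Pi.single_apply]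
  obtain ⟨i, j, hij⟩ : ∃ i j, R i j ≠ 0 := by
    by_contra h
    push_neg at h
    exact hR (by ext i j; exact h i j)
  by_cases hii : R i i ≠ 0
  · exact ⟨Pi.single i 1, by rw [key]; exact hii⟩
  by_cases hjj : R j j ≠ 0
  · exact ⟨Pi.single j 1, by rw [key]; exact hjj⟩
  push_neg at hii hjj
  refine ⟨Pi.single i 1 + Pi.single j 1, ?_⟩
  have expand : (Pi.single i 1 + Pi.single j 1 : Fin n → ℝ) ⬝ᵥ
      (R *ᵥ (Pi.single i 1 + Pi.single j 1)) = R i i + R i j + R j i + R j j := by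
    simp only [Matrix.mulVec_add, dotProduct_add, add_dotProduct, key]
    ring
  rw [expand, hii, hjj, hs.apply i j]
  intro h
  apply hij
  linarith

/-- If `P`, `Q` are linearly independent and `(f x)² ≥ γ* > 0` on the feasible
set `{g ≤ 0}`, then `f ≥ √γ*` on the whole feasible set or `f ≤ −√γ*` on the
whole feasible set. -/
theorem AQP_sign_dichotomy {n : ℕ}
    (P Q : Matrix (Fin n) (Fin n) ℝ) (hP : P.IsSymm) (hQ : Q.IsSymm)
    (p q : Fin n → ℝ) (p₀ q₀ : ℝ)
    (f g : (Fin n → ℝ) → ℝ)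
    (hf : ∀ x, f x = x ⬝ᵥ (P *ᵥ x) + p ⬝ᵥ x + p₀)
    (hg : ∀ x, g x = x ⬝ᵥ (Q *ᵥ x) + q ⬝ᵥ x + q₀)
    (hind : ∀ α β : ℝ, α • P + β • Q = 0 → α = 0 ∧ β = 0)
    (γstar : ℝ) (hγ : 0 < γstar)
    (hlb : ∀ x : Fin n → ℝ, g x ≤ 0 → γstar ≤ (f x) ^ 2) :
    (∀ x : Fin n → ℝ, g x ≤ 0 → Real.sqrt γstar ≤ f x) ∨
    (∀ x : Fin n → ℝ, g x ≤ 0 → f x ≤ -Real.sqrt γstar) := by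
  by_contra hcon
  push_neg at hcon
  obtain ⟨⟨v, hgv, hfv⟩, ⟨u, hgu, hfu⟩⟩ := hcon
  have hsγ : 0 < Real.sqrt γstar := Real.sqrt_pos.mpr hγ
  have hsq : Real.sqrt γstar ^ 2 = γstar := Real.sq_sqrt hγ.le
  -- f u > 0 and f v < 0
  have hfu0 : 0 < f u := by
    by_contra h
    push_neg at h
    have h1 : 0 < f u + Real.sqrt γstar := by linarith
    have h2 : 0 < Real.sqrt γstar - f u := by linarith
    nlinarith [mul_pos h1 h2, hlb u hgu]
  have hfv0 : f v < 0 := by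
    by_contra h
    push_neg at h
    have h1 : 0 < Real.sqrt γstar + f v := by linarith
    have h2 : 0 < Real.sqrt γstar - f v := by linarith
    nlinarith [mul_pos h1 h2, hlb v hgv]
  -- it suffices to produce a feasible zero of f
  have final : ∀ z : Fin n → ℝ, g z ≤ 0 → f z = 0 → False := by
    intro z hz h0
    have := hlb z hz
    rw [h0] at this
    nlinarith
  set d : Fin n → ℝ := v - u with hd
  have huv : u + (1:ℝ) • d = v := by rw [one_smul, hd]; abel
  rcases le_or_gt 0 (d ⬝ᵥ (Q *ᵥ d)) with hb | hb
  · -- convex case along the segment from u to v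
    obtain ⟨t, h1, h2⟩ := AQP_caseI (fun t => f (u + t • d)) (fun t => g (u + t • d))
      (f u) (u ⬝ᵥ (P *ᵥ d) + d ⬝ᵥ (P *ᵥ u) + p ⬝ᵥ d) (d ⬝ᵥ (P *ᵥ d))
      (g u) (u ⬝ᵥ (Q *ᵥ d) + d ⬝ᵥ (Q *ᵥ u) + q ⬝ᵥ d) (d ⬝ᵥ (Q *ᵥ d))
      (fun t => AQP_expand_line P p p₀ f hf u d t)
      (fun t => AQP_expand_line Q q q₀ g hg u d t)
      hb hfu0 (by show f (u + (1:ℝ) • d) < 0; rw [huv]; exact hfv0) hgu (by show g (u + (1:ℝ) • d) ≤ 0; rw [huv]; exact hgv)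
    exact final _ h1 h2
  · -- concave constraint case
    have hPne : P ≠ 0 := by
      intro h
      have := hind 1 0 (by simp [h])
      exact one_ne_zero this.1
    obtain ⟨e, he⟩ := AQP_exists_qf_ne P hP hPne
    obtain ⟨lam, hblam, halam⟩ := AQP_threeLam (e ⬝ᵥ (P *ᵥ e))
      (e ⬝ᵥ (P *ᵥ d) + d ⬝ᵥ (P *ᵥ e)) (d ⬝ᵥ (P *ᵥ d))
      (e ⬝ᵥ (Q *ᵥ e)) (e ⬝ᵥ (Q *ᵥ d) + d ⬝ᵥ (Q *ᵥ e)) (d ⬝ᵥ (Q *ᵥ d)) he hb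
    set m : Fin n → ℝ := e + lam • d with hm
    have hmP : m ⬝ᵥ (P *ᵥ m) ≠ 0 := by
      rw [hm, AQP_bilin_expand]; exact halam
    have hmQ : m ⬝ᵥ (Q *ᵥ m) < 0 := by
      rw [hm, AQP_bilin_expand]; exact hblam
    rcases lt_or_gt_of_ne hmP with ham | ham
    · -- negative leading coefficient: work from u
      obtain ⟨t, h1, h2⟩ := AQP_lemmaM (fun t => f (u + t • m)) (fun t => g (u + t • m))
        (f u) (u ⬝ᵥ (P *ᵥ m) + m ⬝ᵥ (P *ᵥ u) + p ⬝ᵥ m) (m ⬝ᵥ (P *ᵥ m))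
        (g u) (u ⬝ᵥ (Q *ᵥ m) + m ⬝ᵥ (Q *ᵥ u) + q ⬝ᵥ m) (m ⬝ᵥ (Q *ᵥ m))
        (fun t => AQP_expand_line P p p₀ f hf u m t)
        (fun t => AQP_expand_line Q q q₀ g hg u m t)
        hfu0 ham hmQ hgu
      exact final _ h1 h2
    · -- positive leading coefficient: work from v with -f
      obtain ⟨t, h1, h2⟩ := AQP_lemmaM (fun t => -(f (v + t • m))) (fun t => g (v + t • m))
        (-(f v)) (-(v ⬝ᵥ (P *ᵥ m) + m ⬝ᵥ (P *ᵥ v) + p ⬝ᵥ m)) (-(m ⬝ᵥ (P *ᵥ m)))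
        (g v) (v ⬝ᵥ (Q *ᵥ m) + m ⬝ᵥ (Q *ᵥ v) + q ⬝ᵥ m) (m ⬝ᵥ (Q *ᵥ m))
        (fun t => by simp only [AQP_expand_line P p p₀ f hf v m]; ring)
        (fun t => AQP_expand_line Q q q₀ g hg v m t)
        (by linarith) (by linarith) hmQ hgv
      exact final _ h1 (by linarith [neg_eq_zero.mp h2])
end
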